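/- Let σ̂ > 0, Δ ∈ ℝ, and λ ≥ 0. For μ ∈ ℝ let g_μ denote the Gaussian density g_μ(x) = (1/√(2πσ̂²))·exp(-(x-μ)²/(2σ̂²)). Then ∫_ℝ g₀(x) · ( g₀(x) / g_{-Δ}(x) )^λ dx = exp( λ(λ+1)·Δ² / (2σ̂²) ). In particular, the logarithm of the moment generating function at λ of the privacy loss of the Gaussian mechanism with sensitivity Δ and noise standard deviation σ̂ equals (λ² + λ)·Δ²/(2σ̂²). -/

import Mathlib

open Real MeasureTheory

/-- The Gaussian density with mean `μ` and standard deviation `σ`. -/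
noncomputable def gaussDensity (σ μ x : ℝ) : ℝ :=
  (1 / Real.sqrt (2 * π * σ ^ 2)) * Real.exp (-(x - μ) ^ 2 / (2 * σ ^ 2))

lemma gaussDensity_eq_gaussianPDFReal (σ μ : ℝ) :
    gaussDensity σ μ = ProbabilityTheory.gaussianPDFReal μ ⟨σ ^ 2, sq_nonneg σ⟩ := by
  ext x
  rw [gaussDensity, one_div]
  rfl

lemma integral_gaussDensity {σ : ℝ} (hσ : σ ≠ 0) (μ : ℝ) :
    ∫ x, gaussDensity σ μ x = 1 := by
  rw [gaussDensity_eq_gaussianPDFReal]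
  exact ProbabilityTheory.integral_gaussianPDFReal_eq_one μ
    fun h ↦ pow_ne_zero 2 hσ (congrArg NNReal.toReal h)

/-- Completing the square in the exponent. -/
lemma gaussDensity_mul_div_rpow {σ : ℝ} (hσ : σ ≠ 0) (μ ν l x : ℝ) :
    gaussDensity σ μ x * (gaussDensity σ μ x / gaussDensity σ ν x) ^ l
      = Real.exp (l * (l + 1) * (μ - ν) ^ 2 / (2 * σ ^ 2))
          * gaussDensity σ (μ + l * (μ - ν)) x := by
  have hc : (1 : ℝ) / √(2 * π * σ ^ 2) ≠ 0 := by positivity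
  unfold gaussDensity
  rw [mul_div_mul_left _ _ hc, ← Real.exp_sub, ← Real.exp_mul, mul_assoc, ← Real.exp_add,
    mul_left_comm, ← Real.exp_add]
  congr 2
  field_simp
  ring

lemma integral_gaussDensity_mul_div_rpow {σ : ℝ} (hσ : σ ≠ 0) (μ ν l : ℝ) :
    ∫ x, gaussDensity σ μ x * (gaussDensity σ μ x / gaussDensity σ ν x) ^ l
      = Real.exp (l * (l + 1) * (μ - ν) ^ 2 / (2 * σ ^ 2)) := by
  simp_rw [gaussDensity_mul_div_rpow hσ, integral_const_mul, integral_gaussDensity hσ, mul_one]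

theorem mgf_privacy_loss_gaussian_general (σ Δ l : ℝ) (hσ : 0 < σ) :
    ∫ x : ℝ, gaussDensity σ 0 x * (gaussDensity σ 0 x / gaussDensity σ (-Δ) x) ^ l
      = Real.exp (l * (l + 1) * Δ ^ 2 / (2 * σ ^ 2)) := by
  rw [integral_gaussDensity_mul_div_rpow hσ.ne', zero_sub, neg_neg]

/-- The moment generating function at `λ ≥ 0` of the privacy loss of the Gaussian mechanism
with sensitivity `Δ` and noise standard deviation `σ̂ > 0`:
`∫ g₀(x) · (g₀(x)/g₋Δ(x))^λ dx = exp (λ(λ+1)Δ²/(2σ̂²))`; equivalently, the log of this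
moment generating function equals `(λ² + λ)·Δ²/(2σ̂²)`. -/
theorem mgf_privacy_loss_gaussian (σ Δ l : ℝ) (hσ : 0 < σ) (hl : 0 ≤ l) :
    ∫ x : ℝ, gaussDensity σ 0 x * (gaussDensity σ 0 x / gaussDensity σ (-Δ) x) ^ l
      = Real.exp (l * (l + 1) * Δ ^ 2 / (2 * σ ^ 2)) :=
  mgf_privacy_loss_gaussian_general σ Δ l hσ
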